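/- arXiv:2102.00620 — 2 statements merged into one kernel-verified Lean document; each statement's English description precedes it below -/
import Mathlib

section
/- Output validity for all valid inputs is equivalent to the projection identity: for a ℂ-linear map M on 2^m × 2^m complex matrices, define the projection superoperator P(X) = ½(X + C X C). Then M ∘ P = P ∘ M ∘ P if and only if for every density matrix ρ (positive semidefinite with trace 1) satisfying C ρ C = ρ, the output satisfies C M(ρ) C = M(ρ). -/
/-!
A matrix is fixed by `P` exactly when it is fixed by the projection `projSup P`, which gives the
forward direction at once. Conversely, every matrix is a complex combination of positive
semidefinite ones; for a Hermitian involution `P`, `projSup P` sends these to `P`-invariant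
positive semidefinite matrices, which are nonnegative multiples of invariant states, and
linearity of `M` does the rest.
-/

open Matrix
open scoped ComplexOrder

noncomputable section

def σZ : Matrix (Fin 2) (Fin 2) ℂ := !![1, 0; 0, -1]

/-- Parity operator `C = Z^{⊗m}`: diagonal with entry `(-1)^{|n̄|}`. -/
def parity (m : ℕ) : Matrix (Fin m → Fin 2) (Fin m → Fin 2) ℂ :=
  Matrix.of fun n n' => ∏ j, σZ (n j) (n' j)

/-- The projection superoperator `X ↦ ½(X + P X P)`. -/
def projSup {A : Type*} [Fintype A] (P : Matrix A A ℂ) :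
    Matrix A A ℂ →ₗ[ℂ] Matrix A A ℂ where
  toFun X := (1 / 2 : ℂ) • (X + P * X * P)
  map_add' X Y := by
    simp only [Matrix.mul_add, Matrix.add_mul, smul_add]
    module
  map_smul' c X := by
    simp only [Matrix.mul_smul, Matrix.smul_mul, smul_add, smul_smul, mul_comm,
      RingHom.id_apply]


lemma σZ_apply_self_mul_self (i : Fin 2) : σZ i i * σZ i i = 1 := by
  fin_cases i <;> simp [σZ]

lemma star_σZ_apply_self (i : Fin 2) : star (σZ i i) = σZ i i := by
  fin_cases i <;> simp [σZ]

lemma parity_eq_diagonal (m : ℕ) :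
    parity m = diagonal fun n => ∏ j, σZ (n j) (n j) := by
  ext n n'
  rcases eq_or_ne n n' with rfl | hne
  · simp [parity]
  · obtain ⟨j, hj⟩ := Function.ne_iff.mp hne
    rw [diagonal_apply_ne _ hne]
    refine Finset.prod_eq_zero (Finset.mem_univ j) ?_
    revert hj
    generalize n j = a
    generalize n' j = b
    fin_cases a <;> fin_cases b <;> simp [σZ]

lemma parity_mul_self (m : ℕ) : parity m * parity m = 1 := by
  rw [parity_eq_diagonal, diagonal_mul_diagonal, ← diagonal_one]
  congr 1
  funext n
  simp only [← Finset.prod_mul_distrib, σZ_apply_self_mul_self, Finset.prod_const_one]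

lemma parity_isHermitian (m : ℕ) : (parity m).IsHermitian := by
  rw [parity_eq_diagonal]
  refine isHermitian_diagonal_of_self_adjoint _ (funext fun n => ?_)
  simp only [Pi.star_apply, star_prod, star_σZ_apply_self]

section projSup

variable {A : Type*} [Fintype A]

lemma projSup_apply (P X : Matrix A A ℂ) : projSup P X = (1 / 2 : ℂ) • (X + P * X * P) := rfl

lemma projSup_eq_self_iff {P Y : Matrix A A ℂ} : projSup P Y = Y ↔ P * Y * P = Y := by
  rw [projSup_apply]
  constructor
  · intro h
    calc P * Y * P = (2 : ℂ) • ((1 / 2 : ℂ) • (Y + P * Y * P)) - Y := by module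
      _ = Y := by rw [h]; module
  · intro h
    rw [h]
    module

lemma conj_projSup [DecidableEq A] {P : Matrix A A ℂ} (hP : P * P = 1) (X : Matrix A A ℂ) :
    P * projSup P X * P = projSup P X := by
  have hPXP : P * (P * X * P) * P = X := by
    rw [← Matrix.mul_assoc, ← Matrix.mul_assoc, hP, Matrix.one_mul, Matrix.mul_assoc, hP,
      Matrix.mul_one]
  rw [projSup_apply, Matrix.mul_smul, Matrix.smul_mul, Matrix.mul_add, Matrix.add_mul, hPXP,
    add_comm]

lemma Matrix.PosSemidef.projSup {P X : Matrix A A ℂ} (hP : P.IsHermitian) (hX : X.PosSemidef) :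
    (projSup P X).PosSemidef := by
  have hPXP : (P * X * P).PosSemidef := by
    simpa only [hP.eq] using hX.mul_mul_conjTranspose_same P
  exact (hX.add hPXP).smul one_half_pos.le

end projSup

section parityPreserving

variable {A : Type*} [Fintype A] {P : Matrix A A ℂ}
  {M : Matrix A A ℂ →ₗ[ℂ] Matrix A A ℂ}

lemma conj_map_eq_map_of_posSemidef
    (hM : ∀ ρ : Matrix A A ℂ, ρ.PosSemidef → ρ.trace = 1 → P * ρ * P = ρ → P * M ρ * P = M ρ)
    {X : Matrix A A ℂ} (hX : X.PosSemidef) (hPX : P * X * P = X) :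
    P * M X * P = M X := by
  rcases eq_or_ne X.trace 0 with htr | htr
  · rw [hX.trace_eq_zero_iff.mp htr, map_zero, Matrix.mul_zero, Matrix.zero_mul]
  have hρ := hM (X.trace⁻¹ • X) (hX.smul (inv_nonneg_of_nonneg hX.trace_nonneg))
    (by rw [trace_smul, smul_eq_mul, inv_mul_cancel₀ htr])
    (by rw [Matrix.mul_smul, Matrix.smul_mul, hPX])
  rw [map_smul, Matrix.mul_smul, Matrix.smul_mul] at hρ
  simpa only [smul_right_inj (inv_ne_zero htr)] using hρ

open scoped MatrixOrder in
lemma conj_map_projSup_eq_map_projSup [DecidableEq A] (hP : P.IsHermitian) (hPP : P * P = 1)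
    (hM : ∀ ρ : Matrix A A ℂ, ρ.PosSemidef → ρ.trace = 1 → P * ρ * P = ρ → P * M ρ * P = M ρ)
    (X : Matrix A A ℂ) :
    P * M (projSup P X) * P = M (projSup P X) := by
  have hX : X ∈ Submodule.span ℂ {a : Matrix A A ℂ | 0 ≤ a} := by
    rw [CStarAlgebra.span_nonneg]
    trivial
  induction hX using Submodule.span_induction with
  | mem a ha =>
    exact conj_map_eq_map_of_posSemidef hM ((Matrix.nonneg_iff_posSemidef.mp ha).projSup hP)
      (conj_projSup hPP a)
  | zero => simp
  | add X Y _ _ hX hY =>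
    simp only [map_add, Matrix.mul_add, Matrix.add_mul, hX, hY]
  | smul c X _ hX =>
    simp only [map_smul, Matrix.mul_smul, Matrix.smul_mul, hX]

theorem map_projSup_eq_projSup_map_projSup_iff [DecidableEq A] (hP : P.IsHermitian)
    (hPP : P * P = 1) :
    (∀ X, M (projSup P X) = projSup P (M (projSup P X))) ↔
      ∀ ρ : Matrix A A ℂ, ρ.PosSemidef → ρ.trace = 1 → P * ρ * P = ρ → P * M ρ * P = M ρ := by
  constructor
  · intro h ρ _ _ hρ
    have h' := h ρ
    rw [projSup_eq_self_iff.mpr hρ] at h'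
    exact projSup_eq_self_iff.mp h'.symm
  · intro hM X
    exact (projSup_eq_self_iff.mpr (conj_map_projSup_eq_map_projSup hP hPP hM X)).symm

end parityPreserving

theorem valid_output_iff_projection_identity_general (m : ℕ)
    (M : Matrix (Fin m → Fin 2) (Fin m → Fin 2) ℂ →ₗ[ℂ]
        Matrix (Fin m → Fin 2) (Fin m → Fin 2) ℂ) :
    (∀ X, M (projSup (parity m) X) = projSup (parity m) (M (projSup (parity m) X))) ↔
      (∀ ρ : Matrix (Fin m → Fin 2) (Fin m → Fin 2) ℂ,
        ρ.PosSemidef → ρ.trace = 1 → parity m * ρ * parity m = ρ →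
          parity m * M ρ * parity m = M ρ) :=
  map_projSup_eq_projSup_map_projSup_iff (parity_isHermitian m) (parity_mul_self m)

theorem valid_output_iff_projection_identity (m : ℕ) (hm : 1 ≤ m)
    (M : Matrix (Fin m → Fin 2) (Fin m → Fin 2) ℂ →ₗ[ℂ]
        Matrix (Fin m → Fin 2) (Fin m → Fin 2) ℂ) :
    (∀ X, M (projSup (parity m) X) = projSup (parity m) (M (projSup (parity m) X))) ↔
      (∀ ρ : Matrix (Fin m → Fin 2) (Fin m → Fin 2) ℂ,
        ρ.PosSemidef → ρ.trace = 1 → parity m * ρ * parity m = ρ →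
          parity m * M ρ * parity m = M ρ) :=
  valid_output_iff_projection_identity_general m M
end
end

section
/- Two superselection-rule-valid maps acting on disjoint sets of fermion modes commute: work with m + p fermion modes (m, p ≥ 1) and their 2(m+p) Jordan–Wigner Majorana operators. Let M₁(X) = Σ χ¹_{ū,ū'} C_ū X C_ū', where the sum ranges over pairs of binary vectors ū, ū' ∈ {0,1}^{2(m+p)} that are supported on the first 2m coordinates (u_k = u'_k = 0 for k > 2m) and satisfy |ū| ≡ |ū'| (mod 2); let M₂(X) = Σ χ²_{v̄,v̄'} C_v̄ X C_v̄', where the sum ranges over pairs of binary vectors v̄, v̄' supported on the last 2p coordinates (v_k = v'_k = 0 for k ≤ 2m) and satisfying |v̄| ≡ |v̄'| (mod 2). Then M₁ ∘ M₂ = M₂ ∘ M₁ as linear maps on 2^{m+p} × 2^{m+p} complex matrices. -/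
open Matrix

noncomputable section

def σI : Matrix (Fin 2) (Fin 2) ℂ := 1
def σX : Matrix (Fin 2) (Fin 2) ℂ := !![0, 1; 1, 0]
def σY : Matrix (Fin 2) (Fin 2) ℂ := !![0, -Complex.I; Complex.I, 0]
/-- Tensor product over `m` qubit sites of single-site matrices. -/
def tensProd (m : ℕ) (f : Fin m → Matrix (Fin 2) (Fin 2) ℂ) :
    Matrix (Fin m → Fin 2) (Fin m → Fin 2) ℂ :=
  Matrix.of fun n n' => ∏ j, f j (n j) (n' j)

/-- Jordan–Wigner Majorana operators, 0-indexed: `majorana m k` is `c_{k+1}`,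
i.e. `c_{2i-1} = X_i Z_{i+1} ⋯ Z_m` and `c_{2i} = Y_i Z_{i+1} ⋯ Z_m`. -/
def majorana (m : ℕ) (k : Fin (2 * m)) :
    Matrix (Fin m → Fin 2) (Fin m → Fin 2) ℂ :=
  tensProd m fun j =>
    if (j : ℕ) < (k : ℕ) / 2 then σI
    else if (j : ℕ) = (k : ℕ) / 2 then (if (k : ℕ) % 2 = 0 then σX else σY)
    else σZ

/-- Hamming weight of a binary vector. -/
def hw {n : ℕ} (u : Fin n → Bool) : ℕ := ∑ k, if u k then 1 else 0

/-- Majorana product operator `C_ū = i^⌊|ū|/2⌋ c_1^{u_1} ⋯ c_{2m}^{u_{2m}}`. -/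
def Cu (m : ℕ) (u : Fin (2 * m) → Bool) :
    Matrix (Fin m → Fin 2) (Fin m → Fin 2) ℂ :=
  Complex.I ^ (hw u / 2) •
    ((List.finRange (2 * m)).map fun k => if u k then majorana m k else 1).prod

/-- The linear map `X ↦ ∑_{ū,ū'} χ_{ū,ū'} C_ū X C_ū'` determined by a chi matrix. -/
def chiMap (m : ℕ) (χ : (Fin (2 * m) → Bool) → (Fin (2 * m) → Bool) → ℂ) :
    Matrix (Fin m → Fin 2) (Fin m → Fin 2) ℂ →ₗ[ℂ]
      Matrix (Fin m → Fin 2) (Fin m → Fin 2) ℂ where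
  toFun X := ∑ u, ∑ u', χ u u' • (Cu m u * X * Cu m u')
  map_add' X Y := by
    simp [Matrix.mul_add, Matrix.add_mul, smul_add, Finset.sum_add_distrib]
  map_smul' c X := by
    simp [Matrix.mul_smul, Matrix.smul_mul, Finset.smul_sum, smul_smul, mul_comm]


/-! Majorana operators on different sites anticommute: their Jordan–Wigner strings differ
on a single site, where `Z` meets `X` or `Y`. Hence monomials `C_u`, `C_v` supported on the
first `2m` and on the last `2p` modes satisfy `C_u C_v = (-1)^{|u||v|} C_v C_u`. Moving `C_u`
past `C_v` and `C_u'` past `C_v'` in a term `C_u C_v X C_v' C_u'` of `M₁ ∘ M₂` costs the sign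
`(-1)^{|u||v| + |u'||v'|}`, which is `1` because `|u| ≡ |u'|` and `|v| ≡ |v'|` mod 2. -/

section TwistedCommute

variable {R A : Type*} [CommSemiring R] [Semiring A] [Algebra R A]

lemma mul_eq_smul_mul_symm {ε : R} (hε : ε * ε = 1) {a b : A} (h : a * b = ε • (b * a)) :
    b * a = ε • (a * b) := by
  rw [h, smul_smul, hε, one_smul]

lemma list_prod_map_mul_eq_smul {ι : Type*} (F : ι → A) (ε : ι → R) (b : A) :
    ∀ l : List ι, (∀ i ∈ l, F i * b = ε i • (b * F i)) →
      (l.map F).prod * b = (l.map ε).prod • (b * (l.map F).prod)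
  | [], _ => by simp
  | i :: l, h => by
    have ih := list_prod_map_mul_eq_smul F ε b l fun j hj => h j (List.mem_cons_of_mem i hj)
    simp only [List.map_cons, List.prod_cons]
    rw [mul_assoc, ih, mul_smul_comm, ← mul_assoc, h i List.mem_cons_self, smul_mul_assoc,
      smul_smul, mul_assoc, mul_comm (l.map ε).prod]

end TwistedCommute

lemma prod_finRange_map_ite_eq_pow_hw {M : Type*} [CommMonoid M] {n : ℕ} (u : Fin n → Bool)
    (s : M) : ((List.finRange n).map fun k => if u k then s else 1).prod = s ^ hw u := by
  rw [← Fin.prod_univ_def, Finset.prod_ite, Finset.prod_const, Finset.prod_const_one, mul_one,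
    hw, Finset.card_filter]

lemma neg_one_pow_mul_self {M : Type*} [Monoid M] [HasDistribNeg M] (n : ℕ) :
    (-1 : M) ^ n * (-1) ^ n = 1 := by
  rw [← pow_add, Even.neg_one_pow ⟨n, rfl⟩]

lemma tensProd_mul (m : ℕ) (f g : Fin m → Matrix (Fin 2) (Fin 2) ℂ) :
    tensProd m f * tensProd m g = tensProd m fun j => f j * g j := by
  ext n n'
  simp only [tensProd, Matrix.mul_apply, Matrix.of_apply]
  rw [Finset.prod_univ_sum (fun _ => Finset.univ) (fun j a => f j (n j) a * g j a (n' j)),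
    Fintype.piFinset_univ]
  exact (Finset.sum_congr rfl fun x _ => Finset.prod_mul_distrib).symm

lemma tensProd_mul_eq_smul (m : ℕ) (f g : Fin m → Matrix (Fin 2) (Fin 2) ℂ) (s : Fin m → ℂ)
    (h : ∀ j, f j * g j = s j • (g j * f j)) :
    tensProd m f * tensProd m g = (∏ j, s j) • (tensProd m g * tensProd m f) := by
  rw [tensProd_mul, tensProd_mul]
  ext n n'
  simp only [tensProd, h, Matrix.of_apply, Matrix.smul_apply, smul_eq_mul, Finset.prod_mul_distrib]

lemma σZ_mul_σX : σZ * σX = (-1 : ℂ) • (σX * σZ) := by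
  simp [σZ, σX]

lemma σZ_mul_σY : σZ * σY = (-1 : ℂ) • (σY * σZ) := by
  simp [σZ, σY]

def jwFactor (k t : ℕ) : Matrix (Fin 2) (Fin 2) ℂ :=
  if t < k / 2 then σI else if t = k / 2 then (if k % 2 = 0 then σX else σY) else σZ

lemma majorana_eq_tensProd (m : ℕ) (k : Fin (2 * m)) :
    majorana m k = tensProd m fun t => jwFactor k t := rfl

lemma jwFactor_mul_jwFactor {j k : ℕ} (hjk : j / 2 < k / 2) (t : ℕ) :
    jwFactor j t * jwFactor k t =
      (if t = k / 2 then (-1 : ℂ) else 1) • (jwFactor k t * jwFactor j t) := by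
  -- below site `k / 2` the factor of `c_k` is `σI`, above it both factors are `σZ`
  rcases lt_trichotomy t (k / 2) with ht | rfl | ht
  · simp [jwFactor, ht, ht.ne, σI]
  · have hj₁ : ¬ k / 2 < j / 2 := hjk.not_gt
    have hj₂ : k / 2 ≠ j / 2 := hjk.ne'
    simp only [jwFactor, lt_irrefl, hj₁, hj₂, if_true, if_false]
    split_ifs
    exacts [σZ_mul_σX, σZ_mul_σY]
  · have hj₁ : ¬ t < j / 2 := by omega
    have hj₂ : t ≠ j / 2 := by omega
    simp [jwFactor, ht.not_gt, ht.ne', hj₁, hj₂]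

lemma majorana_mul_majorana_of_site_lt (m : ℕ) {j k : Fin (2 * m)} (hjk : (j : ℕ) / 2 < k / 2) :
    majorana m j * majorana m k = (-1 : ℂ) • (majorana m k * majorana m j) := by
  have hk : (k : ℕ) / 2 < m := by omega
  rw [majorana_eq_tensProd, majorana_eq_tensProd,
    tensProd_mul_eq_smul _ _ _ _ fun t => jwFactor_mul_jwFactor hjk t]
  congr 1
  have hsite : ∀ t : Fin m, (t : ℕ) = k / 2 ↔ t = ⟨k / 2, hk⟩ := fun t => by simp [Fin.ext_iff]
  simp only [hsite, Finset.prod_ite_eq', Finset.mem_univ, if_true]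

def majoranaProd (m : ℕ) (u : Fin (2 * m) → Bool) : Matrix (Fin m → Fin 2) (Fin m → Fin 2) ℂ :=
  ((List.finRange (2 * m)).map fun k => if u k then majorana m k else 1).prod

lemma Cu_eq_smul_majoranaProd (m : ℕ) (u : Fin (2 * m) → Bool) :
    Cu m u = Complex.I ^ (hw u / 2) • majoranaProd m u := rfl

section DisjointSupports

variable {n m : ℕ} {u u' v v' : Fin (2 * n) → Bool}

lemma majoranaProd_mul_majorana (hu : ∀ k : Fin (2 * n), 2 * m ≤ (k : ℕ) → u k = false)
    {k : Fin (2 * n)} (hk : 2 * m ≤ (k : ℕ)) :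
    majoranaProd n u * majorana n k = (-1 : ℂ) ^ hw u • (majorana n k * majoranaProd n u) := by
  rw [majoranaProd, list_prod_map_mul_eq_smul _ (fun j => if u j then (-1 : ℂ) else 1) _ _ ?_,
    prod_finRange_map_ite_eq_pow_hw]
  intro j _
  by_cases hj : u j
  · have hjm : (j : ℕ) < 2 * m := by
      by_contra hc
      simp [hu j (by omega)] at hj
    simpa [hj] using majorana_mul_majorana_of_site_lt n (j := j) (k := k) (by omega)
  · simp [hj]

lemma majoranaProd_mul_majoranaProd (hu : ∀ k : Fin (2 * n), 2 * m ≤ (k : ℕ) → u k = false)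
    (hv : ∀ k : Fin (2 * n), (k : ℕ) < 2 * m → v k = false) :
    majoranaProd n u * majoranaProd n v =
      (-1 : ℂ) ^ (hw u * hw v) • (majoranaProd n v * majoranaProd n u) := by
  refine mul_eq_smul_mul_symm (neg_one_pow_mul_self _) ?_
  rw [majoranaProd,
    list_prod_map_mul_eq_smul _ (fun j => if v j then (-1 : ℂ) ^ hw u else 1) _ _ ?_,
    prod_finRange_map_ite_eq_pow_hw, ← pow_mul, mul_comm (hw u)]
  intro j _
  by_cases hj : v j
  · have hjm : 2 * m ≤ (j : ℕ) := by
      by_contra hc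
      simp [hv j (by omega)] at hj
    simpa [hj] using
      mul_eq_smul_mul_symm (neg_one_pow_mul_self _) (majoranaProd_mul_majorana hu hjm)
  · simp [hj]

lemma Cu_mul_Cu (hu : ∀ k : Fin (2 * n), 2 * m ≤ (k : ℕ) → u k = false)
    (hv : ∀ k : Fin (2 * n), (k : ℕ) < 2 * m → v k = false) :
    Cu n u * Cu n v = (-1 : ℂ) ^ (hw u * hw v) • (Cu n v * Cu n u) := by
  simp only [Cu_eq_smul_majoranaProd, smul_mul_smul_comm, majoranaProd_mul_majoranaProd hu hv,
    smul_smul]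
  ring_nf

lemma Cu_mul_Cu_mul_mul_Cu_mul_Cu (hu : ∀ k : Fin (2 * n), 2 * m ≤ (k : ℕ) → u k = false)
    (hu' : ∀ k : Fin (2 * n), 2 * m ≤ (k : ℕ) → u' k = false) (hpar : hw u % 2 = hw u' % 2)
    (hv : ∀ k : Fin (2 * n), (k : ℕ) < 2 * m → v k = false)
    (hv' : ∀ k : Fin (2 * n), (k : ℕ) < 2 * m → v' k = false) (hpar' : hw v % 2 = hw v' % 2)
    (X : Matrix (Fin n → Fin 2) (Fin n → Fin 2) ℂ) :
    Cu n u * (Cu n v * X * Cu n v') * Cu n u' = Cu n v * (Cu n u * X * Cu n u') * Cu n v' := by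
  have hsign : (-1 : ℂ) ^ (hw u * hw v) = (-1) ^ (hw u' * hw v') := by
    rw [neg_one_pow_eq_pow_mod_two, Nat.mul_mod, hpar, hpar', ← Nat.mul_mod,
      ← neg_one_pow_eq_pow_mod_two]
  have hleft := Cu_mul_Cu hu hv
  have hright := mul_eq_smul_mul_symm (neg_one_pow_mul_self _) (Cu_mul_Cu hu' hv')
  calc Cu n u * (Cu n v * X * Cu n v') * Cu n u'
      = Cu n u * Cu n v * X * (Cu n v' * Cu n u') := by simp only [mul_assoc]
    _ = ((-1 : ℂ) ^ (hw u * hw v) * (-1) ^ (hw u' * hw v')) •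
          (Cu n v * Cu n u * X * (Cu n u' * Cu n v')) := by
      rw [hleft, hright, smul_mul_assoc, smul_mul_assoc, mul_smul_comm, smul_smul]
    _ = Cu n v * (Cu n u * X * Cu n u') * Cu n v' := by
      rw [hsign, neg_one_pow_mul_self, one_smul]
      simp only [mul_assoc]

lemma Cu_mul_chiMap_mul_Cu (χ : (Fin (2 * n) → Bool) → (Fin (2 * n) → Bool) → ℂ)
    (hχ : ∀ v v', χ v v' ≠ 0 →
      (∀ k : Fin (2 * n), (k : ℕ) < 2 * m → v k = false ∧ v' k = false) ∧ hw v % 2 = hw v' % 2)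
    (hu : ∀ k : Fin (2 * n), 2 * m ≤ (k : ℕ) → u k = false)
    (hu' : ∀ k : Fin (2 * n), 2 * m ≤ (k : ℕ) → u' k = false) (hpar : hw u % 2 = hw u' % 2)
    (X : Matrix (Fin n → Fin 2) (Fin n → Fin 2) ℂ) :
    Cu n u * chiMap n χ X * Cu n u' = chiMap n χ (Cu n u * X * Cu n u') := by
  simp only [chiMap, LinearMap.coe_mk, AddHom.coe_mk, Finset.mul_sum, Finset.sum_mul,
    mul_smul_comm, smul_mul_assoc]
  refine Finset.sum_congr rfl fun v _ => Finset.sum_congr rfl fun v' _ => ?_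
  by_cases hvv' : χ v v' = 0
  · simp [hvv']
  · obtain ⟨hsupp, hpar'⟩ := hχ v v' hvv'
    rw [Cu_mul_Cu_mul_mul_Cu_mul_Cu hu hu' hpar (fun k hk => (hsupp k hk).1)
      (fun k hk => (hsupp k hk).2) hpar']

end DisjointSupports

theorem valid_maps_on_disjoint_modes_commute_general (m p : ℕ)
    (χ₁ χ₂ : (Fin (2 * (m + p)) → Bool) → (Fin (2 * (m + p)) → Bool) → ℂ)
    (h₁ : ∀ u u', χ₁ u u' ≠ 0 →
      (∀ k : Fin (2 * (m + p)), 2 * m ≤ (k : ℕ) → u k = false ∧ u' k = false) ∧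
        hw u % 2 = hw u' % 2)
    (h₂ : ∀ v v', χ₂ v v' ≠ 0 →
      (∀ k : Fin (2 * (m + p)), (k : ℕ) < 2 * m → v k = false ∧ v' k = false) ∧
        hw v % 2 = hw v' % 2)
    (X : Matrix (Fin (m + p) → Fin 2) (Fin (m + p) → Fin 2) ℂ) :
    chiMap (m + p) χ₁ (chiMap (m + p) χ₂ X) =
      chiMap (m + p) χ₂ (chiMap (m + p) χ₁ X) := by
  have hconj : ∀ u u', χ₁ u u' • (Cu (m + p) u * chiMap (m + p) χ₂ X * Cu (m + p) u') =
      χ₁ u u' • chiMap (m + p) χ₂ (Cu (m + p) u * X * Cu (m + p) u') := by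
    intro u u'
    by_cases huu' : χ₁ u u' = 0
    · simp [huu']
    · obtain ⟨hsupp, hpar⟩ := h₁ u u' huu'
      rw [Cu_mul_chiMap_mul_Cu χ₂ h₂ (fun k hk => (hsupp k hk).1) (fun k hk => (hsupp k hk).2)
        hpar]
  calc chiMap (m + p) χ₁ (chiMap (m + p) χ₂ X)
      = ∑ u, ∑ u', χ₁ u u' • (Cu (m + p) u * chiMap (m + p) χ₂ X * Cu (m + p) u') := rfl
    _ = ∑ u, ∑ u', χ₁ u u' • chiMap (m + p) χ₂ (Cu (m + p) u * X * Cu (m + p) u') := by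
      simp only [hconj]
    _ = chiMap (m + p) χ₂ (∑ u, ∑ u', χ₁ u u' • (Cu (m + p) u * X * Cu (m + p) u')) := by
      simp only [map_sum, map_smul]
    _ = chiMap (m + p) χ₂ (chiMap (m + p) χ₁ X) := rfl

theorem valid_maps_on_disjoint_modes_commute (m p : ℕ) (hm : 1 ≤ m) (hp : 1 ≤ p)
    (χ₁ χ₂ : (Fin (2 * (m + p)) → Bool) → (Fin (2 * (m + p)) → Bool) → ℂ)
    (h₁ : ∀ u u', χ₁ u u' ≠ 0 →
      (∀ k : Fin (2 * (m + p)), 2 * m ≤ (k : ℕ) → u k = false ∧ u' k = false) ∧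
        hw u % 2 = hw u' % 2)
    (h₂ : ∀ v v', χ₂ v v' ≠ 0 →
      (∀ k : Fin (2 * (m + p)), (k : ℕ) < 2 * m → v k = false ∧ v' k = false) ∧
        hw v % 2 = hw v' % 2)
    (X : Matrix (Fin (m + p) → Fin 2) (Fin (m + p) → Fin 2) ℂ) :
    chiMap (m + p) χ₁ (chiMap (m + p) χ₂ X) =
      chiMap (m + p) χ₂ (chiMap (m + p) χ₁ X) :=
  valid_maps_on_disjoint_modes_commute_general m p χ₁ χ₂ h₁ h₂ X
end
end
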